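/- arXiv:2205.05415 — 3 statements merged into one kernel-verified Lean document; each statement's English description precedes it below -/
import Mathlib

section
/- Consider the pentagon model (n = 5) and the entangled state Φ_H. For every ε ∈ (0,1] and every pair (i,j) ∈ {(3,4), (3,5), (4,3), (4,4), (5,3)}, there exist dichotomic measurements for Alice and Bob, each of the form (e_k, ē_k) or (ē_k, e_k) for some k ∈ {1,…,5}, such that the mixed state W_ε = ε·Φ_H + (1−ε)·ω_i ω_jᵀ satisfies Hardy's three zero conditions and has Hardy success probability ε·(1 − 2√5/5) ≈ 0.1056·ε > 0. Thus these mixed states of the bipartite pentagon exhibit Hardy-type nonlocality. -/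
open Real Matrix

/-- `r = sqrt(sec(π/5))` for the pentagon model. -/
noncomputable def rP : ℝ := Real.sqrt (1 / Real.cos (Real.pi / 5))

/-- Pure states of the pentagon: `ω_i = (r cos(2πi/5), r sin(2πi/5), 1)ᵀ`. -/
noncomputable def omegaP (i : ℕ) : Fin 3 → ℝ :=
  ![rP * Real.cos (2 * Real.pi * i / 5), rP * Real.sin (2 * Real.pi * i / 5), 1]

/-- Ray-extremal effects of the pentagon:
`e_i = (1/(1+r²))·(r cos(2πi/5), r sin(2πi/5), 1)ᵀ`. -/
noncomputable def eP (i : ℕ) : Fin 3 → ℝ :=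
  (1 / (1 + rP ^ 2)) •
    ![rP * Real.cos (2 * Real.pi * i / 5), rP * Real.sin (2 * Real.pi * i / 5), 1]

/-- The unit effect `u = (0,0,1)ᵀ`. -/
noncomputable def uEff : Fin 3 → ℝ := ![0, 0, 1]

/-- The entangled state `Φ_H` of the bipartite pentagon model. -/
noncomputable def PhiH : Matrix (Fin 3) (Fin 3) ℝ :=
  !![-Real.cos (Real.pi / 5), -(rP ^ 6 * Real.sin (Real.pi / 5)) / (8 * (1 + rP ^ 2)), 0;
     -(rP ^ 6 * Real.sin (Real.pi / 5)) / (8 * (1 + rP ^ 2)), Real.cos (Real.pi / 5),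
       -(rP ^ 3) / (4 * Real.sin (Real.pi / 5));
     0, -(rP ^ 3) / (4 * Real.sin (Real.pi / 5)), 1]

/-- Probability of local effects `E` (Alice) and `F` (Bob) on a bipartite state `Φ`:
`P_Φ(E,F) = Eᵀ Φ F`. -/
noncomputable def prob (Φ : Matrix (Fin 3) (Fin 3) ℝ) (E F : Fin 3 → ℝ) : ℝ :=
  E ⬝ᵥ Φ.mulVec F

/-- A dichotomic pentagon measurement of the form `(e_k, ē_k)` or `(ē_k, e_k)`
for some `k ∈ {1,…,5}`. -/
def IsPentMeasurement (M : (Fin 3 → ℝ) × (Fin 3 → ℝ)) : Prop :=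
  ∃ k ∈ Finset.Icc 1 5, M = (eP k, uEff - eP k) ∨ M = (uEff - eP k, eP k)

lemma sqrt5_sq : Real.sqrt 5 ^ 2 = 5 := Real.sq_sqrt (by norm_num)
lemma sqrt5_pos : 0 < Real.sqrt 5 := Real.sqrt_pos.mpr (by norm_num)
lemma cos5 : Real.cos (Real.pi/5) = (1 + Real.sqrt 5)/4 := Real.cos_pi_div_five
lemma cos5_pos : 0 < Real.cos (Real.pi/5) := by rw [cos5]; positivity
lemma rP_sq : rP^2 = Real.sqrt 5 - 1 := by
  rw [rP, Real.sq_sqrt (le_of_lt (div_pos one_pos cos5_pos)), cos5]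
  have h5 := sqrt5_sq
  have : (1:ℝ) + Real.sqrt 5 ≠ 0 := by positivity
  field_simp
  linear_combination (-1) * sqrt5_sq
lemma one_add_rP_sq : 1 + rP^2 = Real.sqrt 5 := by rw [rP_sq]; ring
lemma rP4 : rP^4 = 6 - 2*Real.sqrt 5 := by
  rw [show rP^4 = (rP^2)^2 by ring, rP_sq]; linear_combination sqrt5_sq
lemma rP6 : rP^6 = 8*Real.sqrt 5 - 16 := by
  rw [show rP^6 = (rP^2)^3 by ring, rP_sq]; linear_combination (Real.sqrt 5 - 3) * sqrt5_sq
lemma rP8 : rP^8 = 56 - 24*Real.sqrt 5 := by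
  rw [show rP^8 = (rP^2)^4 by ring, rP_sq]
  linear_combination (Real.sqrt 5 ^2 - 4*Real.sqrt 5 + 11) * sqrt5_sq
lemma rP_pos : 0 < rP := Real.sqrt_pos.mpr (div_pos one_pos cos5_pos)
lemma sinP_pos : 0 < Real.sin (Real.pi/5) :=
  Real.sin_pos_of_pos_of_lt_pi (by positivity) (by linarith [Real.pi_pos])
lemma sinP_sq : Real.sin (Real.pi/5)^2 = (5 - Real.sqrt 5)/8 := by
  have h := Real.sin_sq_add_cos_sq (Real.pi/5)
  rw [cos5] at h
  linear_combination h - (1/16) * sqrt5_sq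
lemma sinP4 : Real.sin (Real.pi/5)^4 = (15 - 5*Real.sqrt 5)/32 := by
  rw [show Real.sin (Real.pi/5)^4 = (Real.sin (Real.pi/5)^2)^2 by ring, sinP_sq]
  linear_combination (1/64) * sqrt5_sq

-- angle values
lemma cos2 : Real.cos (2*Real.pi/5) = (Real.sqrt 5 - 1)/4 := by
  have h := Real.cos_two_mul (Real.pi/5)
  rw [show 2*(Real.pi/5) = 2*Real.pi/5 by ring, cos5] at h
  rw [h]; linear_combination (1/8) * sqrt5_sq
lemma sin2 : Real.sin (2*Real.pi/5) = Real.sin (Real.pi/5) * (1 + Real.sqrt 5)/2 := by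
  have h := Real.sin_two_mul (Real.pi/5)
  rw [show 2*(Real.pi/5) = 2*Real.pi/5 by ring, cos5] at h
  rw [h]; ring
lemma cos4 : Real.cos (4*Real.pi/5) = -((1 + Real.sqrt 5)/4) := by
  rw [show 4*Real.pi/5 = Real.pi - Real.pi/5 by ring, Real.cos_pi_sub, cos5]
lemma sin4 : Real.sin (4*Real.pi/5) = Real.sin (Real.pi/5) := by
  rw [show 4*Real.pi/5 = Real.pi - Real.pi/5 by ring, Real.sin_pi_sub]
lemma cos6 : Real.cos (6*Real.pi/5) = -((1 + Real.sqrt 5)/4) := by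
  rw [show 6*Real.pi/5 = Real.pi/5 + Real.pi by ring, Real.cos_add_pi, cos5]
lemma sin6 : Real.sin (6*Real.pi/5) = -Real.sin (Real.pi/5) := by
  rw [show 6*Real.pi/5 = Real.pi/5 + Real.pi by ring, Real.sin_add_pi]
lemma cos8 : Real.cos (8*Real.pi/5) = (Real.sqrt 5 - 1)/4 := by
  rw [show 8*Real.pi/5 = 2*Real.pi - 2*Real.pi/5 by ring, Real.cos_two_pi_sub, cos2]
lemma sin8 : Real.sin (8*Real.pi/5) = -(Real.sin (Real.pi/5) * (1 + Real.sqrt 5)/2) := by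
  rw [show 8*Real.pi/5 = 2*Real.pi - 2*Real.pi/5 by ring, Real.sin_two_pi_sub, sin2]

lemma sinP_ne : Real.sin (Real.pi/5) ≠ 0 := ne_of_gt sinP_pos
lemma sqrt5_ne : Real.sqrt 5 ≠ 0 := ne_of_gt sqrt5_pos

lemma prob_expand (Φ : Matrix (Fin 3) (Fin 3) ℝ) (E F : Fin 3 → ℝ) :
    prob Φ E F = E 0 * (Φ 0 0 * F 0 + Φ 0 1 * F 1 + Φ 0 2 * F 2)
      + E 1 * (Φ 1 0 * F 0 + Φ 1 1 * F 1 + Φ 1 2 * F 2)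
      + E 2 * (Φ 2 0 * F 0 + Φ 2 1 * F 1 + Φ 2 2 * F 2) := by
  simp [prob, Matrix.mulVec, dotProduct, Fin.sum_univ_three]

-- PhiH entries in cleaned form
lemma PhiH00 : PhiH 0 0 = -((1 + Real.sqrt 5)/4) := by simp [PhiH, cos5]
lemma PhiH01 : PhiH 0 1 = -((Real.sqrt 5 - 2) * Real.sin (Real.pi/5) / Real.sqrt 5) := by
  show -(rP ^ 6 * Real.sin (Real.pi / 5)) / (8 * (1 + rP ^ 2)) = _
  rw [rP6, one_add_rP_sq]; field_simp; ring
lemma PhiH10 : PhiH 1 0 = -((Real.sqrt 5 - 2) * Real.sin (Real.pi/5) / Real.sqrt 5) := by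
  show -(rP ^ 6 * Real.sin (Real.pi / 5)) / (8 * (1 + rP ^ 2)) = _
  rw [rP6, one_add_rP_sq]; field_simp; ring
lemma PhiH02 : PhiH 0 2 = 0 := by simp [PhiH]
lemma PhiH20 : PhiH 2 0 = 0 := by simp [PhiH]
lemma PhiH11 : PhiH 1 1 = (1 + Real.sqrt 5)/4 := by simp [PhiH, cos5]
lemma PhiH12 : PhiH 1 2 = -(rP * (Real.sqrt 5 - 1) / (4 * Real.sin (Real.pi/5))) := by
  show -(rP ^ 3) / (4 * Real.sin (Real.pi / 5)) = _
  rw [show rP^3 = rP * rP^2 by ring, rP_sq]; ring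
lemma PhiH21 : PhiH 2 1 = -(rP * (Real.sqrt 5 - 1) / (4 * Real.sin (Real.pi/5))) := by
  show -(rP ^ 3) / (4 * Real.sin (Real.pi / 5)) = _
  rw [show rP^3 = rP * rP^2 by ring, rP_sq]; ring
lemma PhiH22 : PhiH 2 2 = 1 := by simp [PhiH]

lemma dot_expand (a b : Fin 3 → ℝ) : a ⬝ᵥ b = a 0 * b 0 + a 1 * b 1 + a 2 * b 2 := by
  simp [dotProduct, Fin.sum_univ_three]

lemma prob_vecMulVec (a b E F : Fin 3 → ℝ) :
    prob (vecMulVec a b) E F = (E ⬝ᵥ a) * (b ⬝ᵥ F) := by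
  simp [prob, Matrix.vecMulVec, Matrix.mulVec, dotProduct, Fin.sum_univ_three]; ring

lemma prob_mix (ε : ℝ) (Φ Ψ : Matrix (Fin 3) (Fin 3) ℝ) (E F : Fin 3 → ℝ) :
    prob (ε • Φ + (1-ε) • Ψ) E F = ε * prob Φ E F + (1-ε) * prob Ψ E F := by
  simp [prob, Matrix.mulVec, dotProduct, Fin.sum_univ_three, Matrix.add_apply,
    Matrix.smul_apply]
  ring

lemma eP1_0 : eP 1 0 = rP * ((Real.sqrt 5 - 1)/4) / Real.sqrt 5 := by
  simp only [eP, omegaP, uEff, Pi.smul_apply, Pi.sub_apply, Matrix.cons_val_zero,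
    Matrix.cons_val_one, Matrix.head_cons, Matrix.cons_val_two, Matrix.tail_cons,
    smul_eq_mul, Nat.cast_one, Nat.cast_ofNat, one_add_rP_sq]
  rw [show (2 * Real.pi * 1 / 5 : ℝ) = 2*Real.pi/5 by ring, cos2]
  all_goals ring

lemma eP1_1 : eP 1 1 = rP * (Real.sin (Real.pi/5) * (1 + Real.sqrt 5)/2) / Real.sqrt 5 := by
  simp only [eP, omegaP, uEff, Pi.smul_apply, Pi.sub_apply, Matrix.cons_val_zero,
    Matrix.cons_val_one, Matrix.head_cons, Matrix.cons_val_two, Matrix.tail_cons,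
    smul_eq_mul, Nat.cast_one, Nat.cast_ofNat, one_add_rP_sq]
  rw [show (2 * Real.pi * 1 / 5 : ℝ) = 2*Real.pi/5 by ring, sin2]
  all_goals ring

lemma eP1_2 : eP 1 2 = 1 / Real.sqrt 5 := by
  simp only [eP, Pi.smul_apply, Matrix.cons_val_two, Matrix.tail_cons, Matrix.head_cons,
    smul_eq_mul, one_add_rP_sq]
  all_goals ring

lemma eP2_0 : eP 2 0 = rP * (-((1 + Real.sqrt 5)/4)) / Real.sqrt 5 := by
  simp only [eP, omegaP, uEff, Pi.smul_apply, Pi.sub_apply, Matrix.cons_val_zero,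
    Matrix.cons_val_one, Matrix.head_cons, Matrix.cons_val_two, Matrix.tail_cons,
    smul_eq_mul, Nat.cast_one, Nat.cast_ofNat, one_add_rP_sq]
  rw [show (2 * Real.pi * 2 / 5 : ℝ) = 4*Real.pi/5 by ring, cos4]
  all_goals ring

lemma eP2_1 : eP 2 1 = rP * (Real.sin (Real.pi/5)) / Real.sqrt 5 := by
  simp only [eP, omegaP, uEff, Pi.smul_apply, Pi.sub_apply, Matrix.cons_val_zero,
    Matrix.cons_val_one, Matrix.head_cons, Matrix.cons_val_two, Matrix.tail_cons,
    smul_eq_mul, Nat.cast_one, Nat.cast_ofNat, one_add_rP_sq]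
  rw [show (2 * Real.pi * 2 / 5 : ℝ) = 4*Real.pi/5 by ring, sin4]
  all_goals ring

lemma eP2_2 : eP 2 2 = 1 / Real.sqrt 5 := by
  simp only [eP, Pi.smul_apply, Matrix.cons_val_two, Matrix.tail_cons, Matrix.head_cons,
    smul_eq_mul, one_add_rP_sq]
  all_goals ring

lemma eP5_0 : eP 5 0 = rP * 1 / Real.sqrt 5 := by
  simp only [eP, omegaP, uEff, Pi.smul_apply, Pi.sub_apply, Matrix.cons_val_zero,
    Matrix.cons_val_one, Matrix.head_cons, Matrix.cons_val_two, Matrix.tail_cons,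
    smul_eq_mul, Nat.cast_one, Nat.cast_ofNat, one_add_rP_sq]
  rw [show (2 * Real.pi * 5 / 5 : ℝ) = 2*Real.pi by ring, Real.cos_two_pi]
  all_goals ring

lemma eP5_1 : eP 5 1 = rP * 0 / Real.sqrt 5 := by
  simp only [eP, omegaP, uEff, Pi.smul_apply, Pi.sub_apply, Matrix.cons_val_zero,
    Matrix.cons_val_one, Matrix.head_cons, Matrix.cons_val_two, Matrix.tail_cons,
    smul_eq_mul, Nat.cast_one, Nat.cast_ofNat, one_add_rP_sq]
  rw [show (2 * Real.pi * 5 / 5 : ℝ) = 2*Real.pi by ring, Real.sin_two_pi]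
  all_goals ring

lemma eP5_2 : eP 5 2 = 1 / Real.sqrt 5 := by
  simp only [eP, Pi.smul_apply, Matrix.cons_val_two, Matrix.tail_cons, Matrix.head_cons,
    smul_eq_mul, one_add_rP_sq]
  all_goals ring

lemma b2_0 : (uEff - eP 2) 0 = -(rP * (-((1 + Real.sqrt 5)/4)) / Real.sqrt 5) := by
  simp only [eP, omegaP, uEff, Pi.smul_apply, Pi.sub_apply, Matrix.cons_val_zero,
    Matrix.cons_val_one, Matrix.head_cons, Matrix.cons_val_two, Matrix.tail_cons,
    smul_eq_mul, Nat.cast_one, Nat.cast_ofNat, one_add_rP_sq]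
  rw [show (2 * Real.pi * 2 / 5 : ℝ) = 4*Real.pi/5 by ring, cos4]
  all_goals ring

lemma b2_1 : (uEff - eP 2) 1 = -(rP * (Real.sin (Real.pi/5)) / Real.sqrt 5) := by
  simp only [eP, omegaP, uEff, Pi.smul_apply, Pi.sub_apply, Matrix.cons_val_zero,
    Matrix.cons_val_one, Matrix.head_cons, Matrix.cons_val_two, Matrix.tail_cons,
    smul_eq_mul, Nat.cast_one, Nat.cast_ofNat, one_add_rP_sq]
  rw [show (2 * Real.pi * 2 / 5 : ℝ) = 4*Real.pi/5 by ring, sin4]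
  all_goals ring

lemma b2_2 : (uEff - eP 2) 2 = 1 - 1 / Real.sqrt 5 := by
  simp only [uEff, eP, Pi.sub_apply, Pi.smul_apply, Matrix.cons_val_two, Matrix.tail_cons,
    Matrix.head_cons, smul_eq_mul, one_add_rP_sq]
  all_goals ring

lemma b5_0 : (uEff - eP 5) 0 = -(rP * 1 / Real.sqrt 5) := by
  simp only [eP, omegaP, uEff, Pi.smul_apply, Pi.sub_apply, Matrix.cons_val_zero,
    Matrix.cons_val_one, Matrix.head_cons, Matrix.cons_val_two, Matrix.tail_cons,
    smul_eq_mul, Nat.cast_one, Nat.cast_ofNat, one_add_rP_sq]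
  rw [show (2 * Real.pi * 5 / 5 : ℝ) = 2*Real.pi by ring, Real.cos_two_pi]
  all_goals ring

lemma b5_1 : (uEff - eP 5) 1 = -(rP * 0 / Real.sqrt 5) := by
  simp only [eP, omegaP, uEff, Pi.smul_apply, Pi.sub_apply, Matrix.cons_val_zero,
    Matrix.cons_val_one, Matrix.head_cons, Matrix.cons_val_two, Matrix.tail_cons,
    smul_eq_mul, Nat.cast_one, Nat.cast_ofNat, one_add_rP_sq]
  rw [show (2 * Real.pi * 5 / 5 : ℝ) = 2*Real.pi by ring, Real.sin_two_pi]
  all_goals ring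

lemma b5_2 : (uEff - eP 5) 2 = 1 - 1 / Real.sqrt 5 := by
  simp only [uEff, eP, Pi.sub_apply, Pi.smul_apply, Matrix.cons_val_two, Matrix.tail_cons,
    Matrix.head_cons, smul_eq_mul, one_add_rP_sq]
  all_goals ring

lemma om3_0 : omegaP 3 0 = rP * (-((1 + Real.sqrt 5)/4)) := by
  simp only [eP, omegaP, uEff, Pi.smul_apply, Pi.sub_apply, Matrix.cons_val_zero,
    Matrix.cons_val_one, Matrix.head_cons, Matrix.cons_val_two, Matrix.tail_cons,
    smul_eq_mul, Nat.cast_one, Nat.cast_ofNat, one_add_rP_sq]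
  rw [show (2 * Real.pi * 3 / 5 : ℝ) = 6*Real.pi/5 by ring, cos6]
  all_goals ring

lemma om3_1 : omegaP 3 1 = rP * (-Real.sin (Real.pi/5)) := by
  simp only [eP, omegaP, uEff, Pi.smul_apply, Pi.sub_apply, Matrix.cons_val_zero,
    Matrix.cons_val_one, Matrix.head_cons, Matrix.cons_val_two, Matrix.tail_cons,
    smul_eq_mul, Nat.cast_one, Nat.cast_ofNat, one_add_rP_sq]
  rw [show (2 * Real.pi * 3 / 5 : ℝ) = 6*Real.pi/5 by ring, sin6]
  all_goals ring

lemma om3_2 : omegaP 3 2 = 1 := by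
  simp [omegaP]

lemma om4_0 : omegaP 4 0 = rP * ((Real.sqrt 5 - 1)/4) := by
  simp only [eP, omegaP, uEff, Pi.smul_apply, Pi.sub_apply, Matrix.cons_val_zero,
    Matrix.cons_val_one, Matrix.head_cons, Matrix.cons_val_two, Matrix.tail_cons,
    smul_eq_mul, Nat.cast_one, Nat.cast_ofNat, one_add_rP_sq]
  rw [show (2 * Real.pi * 4 / 5 : ℝ) = 8*Real.pi/5 by ring, cos8]
  all_goals ring

lemma om4_1 : omegaP 4 1 = rP * (-(Real.sin (Real.pi/5) * (1 + Real.sqrt 5)/2)) := by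
  simp only [eP, omegaP, uEff, Pi.smul_apply, Pi.sub_apply, Matrix.cons_val_zero,
    Matrix.cons_val_one, Matrix.head_cons, Matrix.cons_val_two, Matrix.tail_cons,
    smul_eq_mul, Nat.cast_one, Nat.cast_ofNat, one_add_rP_sq]
  rw [show (2 * Real.pi * 4 / 5 : ℝ) = 8*Real.pi/5 by ring, sin8]
  all_goals ring

lemma om4_2 : omegaP 4 2 = 1 := by
  simp [omegaP]

lemma om5_0 : omegaP 5 0 = rP * 1 := by
  simp only [eP, omegaP, uEff, Pi.smul_apply, Pi.sub_apply, Matrix.cons_val_zero,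
    Matrix.cons_val_one, Matrix.head_cons, Matrix.cons_val_two, Matrix.tail_cons,
    smul_eq_mul, Nat.cast_one, Nat.cast_ofNat, one_add_rP_sq]
  rw [show (2 * Real.pi * 5 / 5 : ℝ) = 2*Real.pi by ring, Real.cos_two_pi]
  all_goals ring

lemma om5_1 : omegaP 5 1 = rP * 0 := by
  simp only [eP, omegaP, uEff, Pi.smul_apply, Pi.sub_apply, Matrix.cons_val_zero,
    Matrix.cons_val_one, Matrix.head_cons, Matrix.cons_val_two, Matrix.tail_cons,
    smul_eq_mul, Nat.cast_one, Nat.cast_ofNat, one_add_rP_sq]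
  rw [show (2 * Real.pi * 5 / 5 : ℝ) = 2*Real.pi by ring, Real.sin_two_pi]
  all_goals ring

lemma om5_2 : omegaP 5 2 = 1 := by
  simp [omegaP]

lemma probA1 : prob PhiH (eP 1) (eP 1) = 1 - 2*Real.sqrt 5/5 := by
  rw [prob_expand, PhiH00, PhiH01, PhiH02, PhiH10, PhiH11, PhiH12, PhiH20, PhiH21, PhiH22, eP1_0, eP1_1, eP1_2]
  have hs := sinP_ne
  have hv := sqrt5_ne
  field_simp
  linear_combination ((300)*Real.sqrt 5^1 + (20)*Real.sqrt 5^2 + (-300)*Real.sqrt 5^3 + (-20)*Real.sqrt 5^4 + (-640)*Real.sin (Real.pi/5)^2 + (400)*Real.sin (Real.pi/5)^2*Real.sqrt 5^1 + (880)*Real.sin (Real.pi/5)^2*Real.sqrt 5^2 + (-80)*Real.sin (Real.pi/5)^2*Real.sqrt 5^3 + (80)*Real.sin (Real.pi/5)^2*Real.sqrt 5^4) * rP_sq + ((640) + (-1040)*Real.sqrt 5^1 + (-480)*Real.sqrt 5^2 + (960)*Real.sqrt 5^3 + (-160)*Real.sqrt 5^4 + (80)*Real.sqrt 5^5) * sinP_sq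 + ((-80) + (-50)*Real.sqrt 5^1 + (-38)*Real.sqrt 5^2 + (50)*Real.sqrt 5^3 + (-10)*Real.sqrt 5^4) * sqrt5_sq

lemma probA2 : prob PhiH (eP 1) (uEff - eP 2) = 0 := by
  rw [prob_expand, PhiH00, PhiH01, PhiH02, PhiH10, PhiH11, PhiH12, PhiH20, PhiH21, PhiH22, eP1_0, eP1_1, eP1_2, b2_0, b2_1, b2_2]
  have hs := sinP_ne
  have hv := sqrt5_ne
  field_simp
  linear_combination ((-46)*Real.sqrt 5^1 + (50)*Real.sqrt 5^2 + (14)*Real.sqrt 5^3 + (-18)*Real.sqrt 5^4 + (96)*Real.sin (Real.pi/5)^2 + (-64)*Real.sin (Real.pi/5)^2*Real.sqrt 5^1 + (-32)*Real.sin (Real.pi/5)^2*Real.sqrt 5^3) * rP_sq + ((-96) + (160)*Real.sqrt 5^1 + (-64)*Real.sqrt 5^2 + (32)*Real.sqrt 5^3 + (-32)*Real.sqrt 5^4) * sinP_sq + ((12) + (-6)*Real.sqrt 5^1 + (8)*Real.sqrt 5^2 + (-14)*Real.sqrt 5^3) * sqrt5_sq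

lemma probA3 : prob PhiH (uEff - eP 2) (eP 1) = 0 := by
  rw [prob_expand, PhiH00, PhiH01, PhiH02, PhiH10, PhiH11, PhiH12, PhiH20, PhiH21, PhiH22, eP1_0, eP1_1, eP1_2, b2_0, b2_1, b2_2]
  have hs := sinP_ne
  have hv := sqrt5_ne
  field_simp
  linear_combination ((-46)*Real.sqrt 5^1 + (50)*Real.sqrt 5^2 + (14)*Real.sqrt 5^3 + (-18)*Real.sqrt 5^4 + (96)*Real.sin (Real.pi/5)^2 + (-64)*Real.sin (Real.pi/5)^2*Real.sqrt 5^1 + (-32)*Real.sin (Real.pi/5)^2*Real.sqrt 5^3) * rP_sq + ((-96) + (160)*Real.sqrt 5^1 + (-64)*Real.sqrt 5^2 + (32)*Real.sqrt 5^3 + (-32)*Real.sqrt 5^4) * sinP_sq + ((12) + (-6)*Real.sqrt 5^1 + (8)*Real.sqrt 5^2 + (-14)*Real.sqrt 5^3) * sqrt5_sq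

lemma probA4 : prob PhiH (eP 2) (eP 2) = 0 := by
  rw [prob_expand, PhiH00, PhiH01, PhiH02, PhiH10, PhiH11, PhiH12, PhiH20, PhiH21, PhiH22, eP2_0, eP2_1, eP2_2]
  have hs := sinP_ne
  have hv := sqrt5_ne
  field_simp
  linear_combination ((31)*Real.sqrt 5^1 + (-35)*Real.sqrt 5^2 + (-3)*Real.sqrt 5^3 + (-1)*Real.sqrt 5^4 + (-64)*Real.sin (Real.pi/5)^2 + (-16)*Real.sin (Real.pi/5)^2*Real.sqrt 5^1 + (48)*Real.sin (Real.pi/5)^2*Real.sqrt 5^2) * rP_sq + ((64) + (-48)*Real.sqrt 5^1 + (-64)*Real.sqrt 5^2 + (48)*Real.sqrt 5^3) * sinP_sq + ((-8) + (1)*Real.sqrt 5^1 + (-8)*Real.sqrt 5^2 + (-1)*Real.sqrt 5^3) * sqrt5_sq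

lemma probA5 : prob PhiH (eP 1) (eP 5) = 0 := by
  rw [prob_expand, PhiH00, PhiH01, PhiH02, PhiH10, PhiH11, PhiH12, PhiH20, PhiH21, PhiH22, eP1_0, eP1_1, eP1_2, eP5_0, eP5_1, eP5_2]
  have hs := sinP_ne
  have hv := sqrt5_ne
  field_simp
  linear_combination ((6)*Real.sin (Real.pi/5)^1*Real.sqrt 5^1 + (-6)*Real.sin (Real.pi/5)^1*Real.sqrt 5^3 + (32)*Real.sin (Real.pi/5)^3 + (16)*Real.sin (Real.pi/5)^3*Real.sqrt 5^1 + (-16)*Real.sin (Real.pi/5)^3*Real.sqrt 5^2) * rP_sq + ((-32)*Real.sin (Real.pi/5)^1 + (16)*Real.sin (Real.pi/5)^1*Real.sqrt 5^1 + (32)*Real.sin (Real.pi/5)^1*Real.sqrt 5^2 + (-16)*Real.sin (Real.pi/5)^1*Real.sqrt 5^3) * sinP_sq + ((4)*Real.sin (Real.pi/5)^1 + (-8)*Real.sin (Real.pi/5)^1*Real.sqrt 5^1 + (-4)*Real.sin (Real.pi/5)^1*Real.sqrt 5^2) * sqrt5_sq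

lemma probA6 : prob PhiH (eP 5) (eP 1) = 0 := by
  rw [prob_expand, PhiH00, PhiH01, PhiH02, PhiH10, PhiH11, PhiH12, PhiH20, PhiH21, PhiH22, eP1_0, eP1_1, eP1_2, eP5_0, eP5_1, eP5_2]
  have hs := sinP_ne
  have hv := sqrt5_ne
  field_simp
  linear_combination ((6)*Real.sin (Real.pi/5)^1*Real.sqrt 5^1 + (-6)*Real.sin (Real.pi/5)^1*Real.sqrt 5^3 + (32)*Real.sin (Real.pi/5)^3 + (16)*Real.sin (Real.pi/5)^3*Real.sqrt 5^1 + (-16)*Real.sin (Real.pi/5)^3*Real.sqrt 5^2) * rP_sq + ((-32)*Real.sin (Real.pi/5)^1 + (16)*Real.sin (Real.pi/5)^1*Real.sqrt 5^1 + (32)*Real.sin (Real.pi/5)^1*Real.sqrt 5^2 + (-16)*Real.sin (Real.pi/5)^1*Real.sqrt 5^3) * sinP_sq + ((4)*Real.sin (Real.pi/5)^1 + (-8)*Real.sin (Real.pi/5)^1*Real.sqrt 5^1 + (-4)*Real.sin (Real.pi/5)^1*Real.sqrt 5^2) * sqrt5_sq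

lemma probA7 : prob PhiH (eP 2) (uEff - eP 5) = 0 := by
  rw [prob_expand, PhiH00, PhiH01, PhiH02, PhiH10, PhiH11, PhiH12, PhiH20, PhiH21, PhiH22, eP2_0, eP2_1, eP2_2, b5_0, b5_1, b5_2]
  have hs := sinP_ne
  have hv := sqrt5_ne
  field_simp
  linear_combination ((-5)*Real.sin (Real.pi/5)^1*Real.sqrt 5^1 + (6)*Real.sin (Real.pi/5)^1*Real.sqrt 5^2 + (-5)*Real.sin (Real.pi/5)^1*Real.sqrt 5^3 + (-32)*Real.sin (Real.pi/5)^3 + (16)*Real.sin (Real.pi/5)^3*Real.sqrt 5^1) * rP_sq + ((32)*Real.sin (Real.pi/5)^1 + (-48)*Real.sin (Real.pi/5)^1*Real.sqrt 5^1 + (16)*Real.sin (Real.pi/5)^1*Real.sqrt 5^2) * sinP_sq + ((-4)*Real.sin (Real.pi/5)^1 + (9)*Real.sin (Real.pi/5)^1*Real.sqrt 5^1 + (-5)*Real.sin (Real.pi/5)^1*Real.sqrt 5^2) * sqrt5_sq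

lemma probA8 : prob PhiH (uEff - eP 5) (eP 2) = 0 := by
  rw [prob_expand, PhiH00, PhiH01, PhiH02, PhiH10, PhiH11, PhiH12, PhiH20, PhiH21, PhiH22, eP2_0, eP2_1, eP2_2, b5_0, b5_1, b5_2]
  have hs := sinP_ne
  have hv := sqrt5_ne
  field_simp
  linear_combination ((-5)*Real.sin (Real.pi/5)^1*Real.sqrt 5^1 + (6)*Real.sin (Real.pi/5)^1*Real.sqrt 5^2 + (-5)*Real.sin (Real.pi/5)^1*Real.sqrt 5^3 + (-32)*Real.sin (Real.pi/5)^3 + (16)*Real.sin (Real.pi/5)^3*Real.sqrt 5^1) * rP_sq + ((32)*Real.sin (Real.pi/5)^1 + (-48)*Real.sin (Real.pi/5)^1*Real.sqrt 5^1 + (16)*Real.sin (Real.pi/5)^1*Real.sqrt 5^2) * sinP_sq + ((-4)*Real.sin (Real.pi/5)^1 + (9)*Real.sin (Real.pi/5)^1*Real.sqrt 5^1 + (-5)*Real.sin (Real.pi/5)^1*Real.sqrt 5^2) * sqrt5_sq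

lemma d13 : eP 1 ⬝ᵥ omegaP 3 = 0 := by
  rw [dot_expand, eP1_0, eP1_1, eP1_2, om3_0, om3_1, om3_2]
  have hs := sinP_ne
  have hv := sqrt5_ne
  field_simp
  linear_combination ((2) + (-2)*Real.sqrt 5^2 + (-16)*Real.sin (Real.pi/5)^2 + (-16)*Real.sin (Real.pi/5)^2*Real.sqrt 5^1) * rP_sq + ((16) + (-16)*Real.sqrt 5^2) * sinP_sq + ((-8)) * sqrt5_sq

lemma d14 : eP 1 ⬝ᵥ omegaP 4 = 0 := by
  rw [dot_expand, eP1_0, eP1_1, eP1_2, om4_0, om4_1, om4_2]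
  have hs := sinP_ne
  have hv := sqrt5_ne
  field_simp
  linear_combination ((4) + (-8)*Real.sqrt 5^1 + (4)*Real.sqrt 5^2 + (-16)*Real.sin (Real.pi/5)^2 + (-32)*Real.sin (Real.pi/5)^2*Real.sqrt 5^1 + (-16)*Real.sin (Real.pi/5)^2*Real.sqrt 5^2) * rP_sq + ((16) + (16)*Real.sqrt 5^1 + (-16)*Real.sqrt 5^2 + (-16)*Real.sqrt 5^3) * sinP_sq + ((-14) + (-4)*Real.sqrt 5^1 + (2)*Real.sqrt 5^2) * sqrt5_sq

lemma d24 : eP 2 ⬝ᵥ omegaP 4 = 0 := by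
  rw [dot_expand, eP2_0, eP2_1, eP2_2, om4_0, om4_1, om4_2]
  have hs := sinP_ne
  have hv := sqrt5_ne
  field_simp
  linear_combination ((2) + (-2)*Real.sqrt 5^2 + (-16)*Real.sin (Real.pi/5)^2 + (-16)*Real.sin (Real.pi/5)^2*Real.sqrt 5^1) * rP_sq + ((16) + (-16)*Real.sqrt 5^2) * sinP_sq + ((-8)) * sqrt5_sq

lemma d25 : eP 2 ⬝ᵥ omegaP 5 = 0 := by
  rw [dot_expand, eP2_0, eP2_1, eP2_2, om5_0, om5_1, om5_2]
  have hs := sinP_ne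
  have hv := sqrt5_ne
  field_simp
  linear_combination ((-1) + (-1)*Real.sqrt 5^1) * rP_sq + 0 * sinP_sq + ((-1)) * sqrt5_sq

lemma d53 : eP 5 ⬝ᵥ omegaP 3 = 0 := by
  rw [dot_expand, eP5_0, eP5_1, eP5_2, om3_0, om3_1, om3_2]
  have hs := sinP_ne
  have hv := sqrt5_ne
  field_simp
  linear_combination ((-1) + (-1)*Real.sqrt 5^1) * rP_sq + 0 * sinP_sq + ((-1)) * sqrt5_sq

/-- for every `ε ∈ (0,1]` and every pair `(i,j)` in the listed set, there are
pentagon measurements for Alice and Bob such that `W_ε = ε·Φ_H + (1−ε)·ω_i ω_jᵀ` satisfies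
Hardy's three zero conditions with success probability `ε·(1 − 2√5/5) > 0`. -/
theorem pentagon_mixed_state_hardy :
    ∀ ε ∈ Set.Ioc (0 : ℝ) 1, ∀ i j : ℕ,
      (i, j) ∈ ({(3, 4), (3, 5), (4, 3), (4, 4), (5, 3)} : Finset (ℕ × ℕ)) →
      ∃ M₁ M₂ N₁ N₂ : (Fin 3 → ℝ) × (Fin 3 → ℝ),
        IsPentMeasurement M₁ ∧ IsPentMeasurement M₂ ∧
        IsPentMeasurement N₁ ∧ IsPentMeasurement N₂ ∧
        prob (ε • PhiH + (1 - ε) • vecMulVec (omegaP i) (omegaP j)) M₁.1 N₂.1 = 0 ∧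
        prob (ε • PhiH + (1 - ε) • vecMulVec (omegaP i) (omegaP j)) M₂.1 N₁.1 = 0 ∧
        prob (ε • PhiH + (1 - ε) • vecMulVec (omegaP i) (omegaP j)) M₂.2 N₂.2 = 0 ∧
        prob (ε • PhiH + (1 - ε) • vecMulVec (omegaP i) (omegaP j)) M₁.1 N₁.1 =
          ε * (1 - 2 * Real.sqrt 5 / 5) ∧
        0 < ε * (1 - 2 * Real.sqrt 5 / 5) := by
  intro ε hε i j hij
  have hpos : 0 < ε * (1 - 2 * Real.sqrt 5 / 5) := by
    have h1 : Real.sqrt 5 < 5/2 := by nlinarith [sqrt5_sq, Real.sqrt_nonneg 5]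
    have := hε.1
    nlinarith
  fin_cases hij
  · exact ⟨(eP 1, uEff - eP 1), (uEff - eP 2, eP 2), (eP 1, uEff - eP 1), (uEff - eP 2, eP 2),
      ⟨1, by decide, Or.inl rfl⟩, ⟨2, by decide, Or.inr rfl⟩, ⟨1, by decide, Or.inl rfl⟩, ⟨2, by decide, Or.inr rfl⟩,
      by rw [prob_mix, prob_vecMulVec, probA2, d13]; ring,
      by rw [prob_mix, prob_vecMulVec, probA3, dotProduct_comm (omegaP 4) _, d14]; ring,
      by rw [prob_mix, prob_vecMulVec, probA4, dotProduct_comm (omegaP 4) _, d24]; ring,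
      by rw [prob_mix, prob_vecMulVec, probA1, d13]; ring,
      hpos⟩
  · exact ⟨(eP 1, uEff - eP 1), (eP 5, uEff - eP 5), (eP 1, uEff - eP 1), (uEff - eP 2, eP 2),
      ⟨1, by decide, Or.inl rfl⟩, ⟨5, by decide, Or.inl rfl⟩, ⟨1, by decide, Or.inl rfl⟩, ⟨2, by decide, Or.inr rfl⟩,
      by rw [prob_mix, prob_vecMulVec, probA2, d13]; ring,
      by rw [prob_mix, prob_vecMulVec, probA6, d53]; ring,
      by rw [prob_mix, prob_vecMulVec, probA8, dotProduct_comm (omegaP 5) _, d25]; ring,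
      by rw [prob_mix, prob_vecMulVec, probA1, d13]; ring,
      hpos⟩
  · exact ⟨(eP 1, uEff - eP 1), (uEff - eP 2, eP 2), (eP 1, uEff - eP 1), (uEff - eP 2, eP 2),
      ⟨1, by decide, Or.inl rfl⟩, ⟨2, by decide, Or.inr rfl⟩, ⟨1, by decide, Or.inl rfl⟩, ⟨2, by decide, Or.inr rfl⟩,
      by rw [prob_mix, prob_vecMulVec, probA2, d14]; ring,
      by rw [prob_mix, prob_vecMulVec, probA3, dotProduct_comm (omegaP 3) _, d13]; ring,
      by rw [prob_mix, prob_vecMulVec, probA4, d24]; ring,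
      by rw [prob_mix, prob_vecMulVec, probA1, d14]; ring,
      hpos⟩
  · exact ⟨(eP 1, uEff - eP 1), (uEff - eP 2, eP 2), (eP 1, uEff - eP 1), (uEff - eP 2, eP 2),
      ⟨1, by decide, Or.inl rfl⟩, ⟨2, by decide, Or.inr rfl⟩, ⟨1, by decide, Or.inl rfl⟩, ⟨2, by decide, Or.inr rfl⟩,
      by rw [prob_mix, prob_vecMulVec, probA2, d14]; ring,
      by rw [prob_mix, prob_vecMulVec, probA3, dotProduct_comm (omegaP 4) _, d14]; ring,
      by rw [prob_mix, prob_vecMulVec, probA4, d24]; ring,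
      by rw [prob_mix, prob_vecMulVec, probA1, d14]; ring,
      hpos⟩
  · exact ⟨(eP 1, uEff - eP 1), (uEff - eP 2, eP 2), (eP 1, uEff - eP 1), (eP 5, uEff - eP 5),
      ⟨1, by decide, Or.inl rfl⟩, ⟨2, by decide, Or.inr rfl⟩, ⟨1, by decide, Or.inl rfl⟩, ⟨5, by decide, Or.inl rfl⟩,
      by rw [prob_mix, prob_vecMulVec, probA5, dotProduct_comm (omegaP 3) _, d53]; ring,
      by rw [prob_mix, prob_vecMulVec, probA3, dotProduct_comm (omegaP 3) _, d13]; ring,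
      by rw [prob_mix, prob_vecMulVec, probA7, d25]; ring,
      by rw [prob_mix, prob_vecMulVec, probA1, dotProduct_comm (omegaP 3) _, d13]; ring,
      hpos⟩
end

section
/- In the bipartite pentagon model, the entangled state Φ_H with Alice's measurements M₁ = (e₁, ē₁), M₂ = (e₅, ē₅) and Bob's measurements N₁ = (e₁, ē₁), N₂ = (ē₂, e₂) satisfies Hardy's conditions: e₁ᵀ Φ_H ē₂ = 0, e₅ᵀ Φ_H e₁ = 0, ē₅ᵀ Φ_H e₂ = 0, and the success probability e₁ᵀ Φ_H e₁ equals 1 − 2√5/5 ≈ 0.1056. Moreover 1 − 2√5/5 > (5√5 − 11)/2, i.e., this Hardy success probability strictly exceeds the optimal quantum value, so the resulting correlation is post-quantum. -/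
open Real Matrix

set_option maxHeartbeats 4000000 in
/-- `Φ_H` with Alice's measurements `M₁ = (e₁, ē₁)`, `M₂ = (e₅, ē₅)` and Bob's
measurements `N₁ = (e₁, ē₁)`, `N₂ = (ē₂, e₂)` satisfies Hardy's conditions with success
probability `1 − 2√5/5`, which strictly exceeds the optimal quantum value `(5√5 − 11)/2`;
the resulting correlation is post-quantum. -/
theorem pentagon_PhiH_hardy_post_quantum :
    prob PhiH (eP 1) (uEff - eP 2) = 0 ∧
    prob PhiH (eP 5) (eP 1) = 0 ∧
    prob PhiH (uEff - eP 5) (eP 2) = 0 ∧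
    prob PhiH (eP 1) (eP 1) = 1 - 2 * Real.sqrt 5 / 5 ∧
    1 - 2 * Real.sqrt 5 / 5 > (5 * Real.sqrt 5 - 11) / 2 := by
  have ha2 : Real.sqrt 5 ^ 2 = 5 := Real.sq_sqrt (by norm_num)
  have hapos : (0:ℝ) < Real.sqrt 5 := Real.sqrt_pos.2 (by norm_num)
  have hc : Real.cos (Real.pi/5) = (1 + Real.sqrt 5)/4 := Real.cos_pi_div_five
  have hcpos : 0 < Real.cos (Real.pi/5) := by rw [hc]; positivity
  have hr2 : rP ^ 2 = Real.sqrt 5 - 1 := by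
    rw [rP, Real.sq_sqrt (by positivity), hc]
    rw [div_eq_iff (by positivity)]
    linear_combination (-1/4) * ha2
  have hspos : 0 < Real.sin (Real.pi/5) := by
    apply Real.sin_pos_of_pos_of_lt_pi <;> [positivity; nlinarith [Real.pi_pos]]
  have hs2 : Real.sin (Real.pi/5) ^ 2 = (5 - Real.sqrt 5)/8 := by
    have := Real.sin_sq_add_cos_sq (Real.pi/5)
    rw [hc] at this; linear_combination this - (1/16) * ha2
  have hr6 : rP ^ 6 = (Real.sqrt 5 - 1)^3 := by rw [← hr2]; ring
  have hr3 : rP ^ 3 = rP * (Real.sqrt 5 - 1) := by rw [← hr2]; ring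
  have h1 : (2:ℝ) * Real.pi * (1:ℕ) / 5 = 2 * (Real.pi/5) := by push_cast; ring
  have h2 : (2:ℝ) * Real.pi * (2:ℕ) / 5 = Real.pi - Real.pi/5 := by push_cast; ring
  have h5 : (2:ℝ) * Real.pi * (5:ℕ) / 5 = 2 * Real.pi := by push_cast; ring
  have hc1 : Real.cos (2 * Real.pi * (1:ℕ) / 5) = (Real.sqrt 5 - 1)/4 := by
    rw [h1, Real.cos_two_mul, hc]; linear_combination (1/8) * ha2
  have hs1 : Real.sin (2 * Real.pi * (1:ℕ) / 5) = Real.sin (Real.pi/5) * (1 + Real.sqrt 5)/2 := by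
    rw [h1, Real.sin_two_mul, hc]; ring
  have hc2' : Real.cos (2 * Real.pi * (2:ℕ) / 5) = -((1 + Real.sqrt 5)/4) := by
    rw [h2, Real.cos_pi_sub, hc]
  have hs2' : Real.sin (2 * Real.pi * (2:ℕ) / 5) = Real.sin (Real.pi/5) := by
    rw [h2, Real.sin_pi_sub]
  have hc5 : Real.cos (2 * Real.pi * (5:ℕ) / 5) = 1 := by rw [h5, Real.cos_two_pi]
  have hs5 : Real.sin (2 * Real.pi * (5:ℕ) / 5) = 0 := by rw [h5, Real.sin_two_pi]
  simp only [prob, PhiH, eP, uEff, Matrix.mulVec, dotProduct, Fin.sum_univ_three,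
    Matrix.cons_val', Matrix.cons_val_zero, Matrix.cons_val_one, Matrix.head_cons,
    Matrix.cons_val_two, Matrix.tail_cons, Matrix.empty_val', Matrix.cons_val_fin_one,
    Matrix.head_fin_const, Pi.smul_apply, Pi.sub_apply, smul_eq_mul, Matrix.of_apply,
    hc1, hs1, hc2', hs2', hc5, hs5]
  rw [hr6, hr3, hr2]
  have hne : (1:ℝ) + (Real.sqrt 5 - 1) ≠ 0 := by nlinarith
  refine ⟨?_, ?_, ?_, ?_, ?_⟩
  · field_simp
    linear_combination ((16) * rP ^ 2 * Real.sin (Real.pi/5) * Real.sqrt 5 + (-16) * rP ^ 2 * Real.sin (Real.pi/5) * Real.sqrt 5 ^ 3 + (-128) * rP ^ 2 * Real.sin (Real.pi/5) ^ 3 * Real.sqrt 5 + (-128) * rP ^ 2 * Real.sin (Real.pi/5) ^ 3 * Real.sqrt 5 ^ 2) * hc + ((-92) * Real.sin (Real.pi/5) * Real.sqrt 5 + (100) * Real.sin (Real.pi/5) * Real.sqrt 5 ^ 2 + (28) * Real.sin (Real.pi/5) * Real.sqrt 5 ^ 3 + (-36) * Real.sin (Real.pi/5) * Real.sqrt 5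 ^ 4 + (12) * Real.sin (Real.pi/5) ^ 3 + (-68) * Real.sin (Real.pi/5) ^ 3 * Real.sqrt 5 + (-24) * Real.sin (Real.pi/5) ^ 3 * Real.sqrt 5 ^ 2 + (-56) * Real.sin (Real.pi/5) ^ 3 * Real.sqrt 5 ^ 3 + (12) * Real.sin (Real.pi/5) ^ 3 * Real.sqrt 5 ^ 4 + (-4) * Real.sin (Real.pi/5) ^ 3 * Real.sqrt 5 ^ 5) * hr2 + ((-12) * Real.sin (Real.pi/5) + (80) * Real.sin (Real.pi/5) * Real.sqrt 5 + (-44) * Real.sin (Real.pi/5) * Real.sqrt 5 ^ 2 + (32) * Real.sin (Real.pi/5) * Real.sqrt 5 ^ 3 + (-68) * Real.sin (Real.pi/5) * Real.sqrt 5 ^ 4 + (16) * Real.sin (Real.pi/5) * Real.sqrt 5 ^ 5 + (-4) * Real.sin (Real.pi/5) * Real.sqrt 5 ^ 6) * hs2 + ((3/2) * Real.sin (Real.pi/5) + (45/2) * Real.sin (Real.pi/5) * Real.sqrt 5 + (-5) * Real.sin (Real.pi/5) * Real.sqrt 5 ^ 2 + (-15) * Real.sin (Real.pi/5) * Real.sqrt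 5 ^ 3 + (-9/2) * Real.sin (Real.pi/5) * Real.sqrt 5 ^ 4 + (1/2) * Real.sin (Real.pi/5) * Real.sqrt 5 ^ 5) * ha2
  · field_simp
    linear_combination ((16) * rP ^ 2 * Real.sin (Real.pi/5) * Real.sqrt 5 + (-16) * rP ^ 2 * Real.sin (Real.pi/5) * Real.sqrt 5 ^ 2) * hc + ((12) * Real.sin (Real.pi/5) * Real.sqrt 5 + (-12) * Real.sin (Real.pi/5) * Real.sqrt 5 ^ 3 + (4) * Real.sin (Real.pi/5) ^ 3 + (-8) * Real.sin (Real.pi/5) ^ 3 * Real.sqrt 5 + (8) * Real.sin (Real.pi/5) ^ 3 * Real.sqrt 5 ^ 3 + (-4) * Real.sin (Real.pi/5) ^ 3 * Real.sqrt 5 ^ 4) * hr2 + ((-4) * Real.sin (Real.pi/5) + (12) * Real.sin (Real.pi/5) * Real.sqrt 5 + (-8) * Real.sin (Real.pi/5) * Real.sqrt 5 ^ 2 + (-8) * Real.sin (Real.pi/5) * Real.sqrt 5 ^ 3 + (12) * Real.sin (Real.pi/5) * Real.sqrt 5 ^ 4 + (-4) * Real.sin (Real.pi/5) * Real.sqrt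 5 ^ 5) * hs2 + ((1/2) * Real.sin (Real.pi/5) + (-12) * Real.sin (Real.pi/5) * Real.sqrt 5 + (-1) * Real.sin (Real.pi/5) * Real.sqrt 5 ^ 2 + (-4) * Real.sin (Real.pi/5) * Real.sqrt 5 ^ 3 + (1/2) * Real.sin (Real.pi/5) * Real.sqrt 5 ^ 4) * ha2
  · field_simp
    linear_combination ((-8) * rP ^ 2 * Real.sin (Real.pi/5) * Real.sqrt 5 + (-8) * rP ^ 2 * Real.sin (Real.pi/5) * Real.sqrt 5 ^ 2) * hc + ((-10) * Real.sin (Real.pi/5) * Real.sqrt 5 + (12) * Real.sin (Real.pi/5) * Real.sqrt 5 ^ 2 + (-10) * Real.sin (Real.pi/5) * Real.sqrt 5 ^ 3 + (-4) * Real.sin (Real.pi/5) ^ 3 + (12) * Real.sin (Real.pi/5) ^ 3 * Real.sqrt 5 + (-12) * Real.sin (Real.pi/5) ^ 3 * Real.sqrt 5 ^ 2 + (4) * Real.sin (Real.pi/5) ^ 3 * Real.sqrt 5 ^ 3) * hr2 + ((4) * Real.sin (Real.pi/5) + (-16) * Real.sin (Real.pi/5) * Real.sqrt 5 + (24) * Real.sin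 (Real.pi/5) * Real.sqrt 5 ^ 2 + (-16) * Real.sin (Real.pi/5) * Real.sqrt 5 ^ 3 + (4) * Real.sin (Real.pi/5) * Real.sqrt 5 ^ 4) * hs2 + ((-1/2) * Real.sin (Real.pi/5) + (13/2) * Real.sin (Real.pi/5) * Real.sqrt 5 + (-11/2) * Real.sin (Real.pi/5) * Real.sqrt 5 ^ 2 + (-1/2) * Real.sin (Real.pi/5) * Real.sqrt 5 ^ 3) * ha2
  · field_simp
    linear_combination ((-160) * rP ^ 2 * Real.sqrt 5 + (320) * rP ^ 2 * Real.sqrt 5 ^ 2 + (-160) * rP ^ 2 * Real.sqrt 5 ^ 3 + (640) * rP ^ 2 * Real.sin (Real.pi/5) ^ 2 * Real.sqrt 5 + (1280) * rP ^ 2 * Real.sin (Real.pi/5) ^ 2 * Real.sqrt 5 ^ 2 + (640) * rP ^ 2 * Real.sin (Real.pi/5) ^ 2 * Real.sqrt 5 ^ 3) * hc + ((600) * Real.sqrt 5 + (40) * Real.sqrt 5 ^ 2 + (-600) * Real.sqrt 5 ^ 3 + (-40) * Real.sqrt 5 ^ 4 + (-80) * Real.sin (Real.pi/5) ^ 2 +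 (400) * Real.sin (Real.pi/5) ^ 2 * Real.sqrt 5 + (320) * Real.sin (Real.pi/5) ^ 2 * Real.sqrt 5 ^ 2 + (320) * Real.sin (Real.pi/5) ^ 2 * Real.sqrt 5 ^ 3 + (400) * Real.sin (Real.pi/5) ^ 2 * Real.sqrt 5 ^ 4 + (-80) * Real.sin (Real.pi/5) ^ 2 * Real.sqrt 5 ^ 5) * hr2 + ((80) + (-480) * Real.sqrt 5 + (80) * Real.sqrt 5 ^ 2 + (-80) * Real.sqrt 5 ^ 4 + (480) * Real.sqrt 5 ^ 5 + (-80) * Real.sqrt 5 ^ 6) * hs2 + ((-10) + (-330) * Real.sqrt 5 + (-136) * Real.sqrt 5 ^ 2 + (320) * Real.sqrt 5 ^ 3 + (-110) * Real.sqrt 5 ^ 4 + (10) * Real.sqrt 5 ^ 5) * ha2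
  · nlinarith [ha2, hapos]
end

section
/- In the bipartite pentagon model, the entangled states Φ_J = I₃ and Φ_H belong to different equivalence classes under local reversible transformations: for all k₁, k₂ ∈ {1,…,5} and s₁, s₂ ∈ {+1, −1}, one has 𝒯^{s₁}_{k₁} · Φ_J · (𝒯^{s₂}_{k₂})ᵀ ≠ Φ_H and 𝒯^{s₁}_{k₁} · Φ_Jᵀ · (𝒯^{s₂}_{k₂})ᵀ ≠ Φ_H (the second case accounting for the Swap operation, which acts as matrix transposition). -/
open Real Matrix

/-- Reversible transformations of the pentagon model:
`𝒯^s_k = [[cos(2πk/5), −s sin(2πk/5), 0], [sin(2πk/5), s cos(2πk/5), 0], [0,0,1]]`. -/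
noncomputable def Tpent (s : ℝ) (k : ℕ) : Matrix (Fin 3) (Fin 3) ℝ :=
  !![Real.cos (2 * Real.pi * k / 5), -s * Real.sin (2 * Real.pi * k / 5), 0;
     Real.sin (2 * Real.pi * k / 5), s * Real.cos (2 * Real.pi * k / 5), 0;
     0, 0, 1]

/-- `Φ_J = I₃` and `Φ_H` are in different equivalence classes under local
reversible transformations: no `𝒯^{s₁}_{k₁} Φ_J (𝒯^{s₂}_{k₂})ᵀ`, nor (accounting for Swap,
which acts as transposition) `𝒯^{s₁}_{k₁} Φ_Jᵀ (𝒯^{s₂}_{k₂})ᵀ`, equals `Φ_H`. -/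
theorem pentagon_PhiJ_PhiH_inequivalent :
    ∀ k₁ ∈ Finset.Icc 1 5, ∀ k₂ ∈ Finset.Icc 1 5, ∀ s₁ s₂ : ℝ,
      (s₁ = 1 ∨ s₁ = -1) → (s₂ = 1 ∨ s₂ = -1) →
      Tpent s₁ k₁ * (1 : Matrix (Fin 3) (Fin 3) ℝ) * (Tpent s₂ k₂)ᵀ ≠ PhiH ∧
      Tpent s₁ k₁ * (1 : Matrix (Fin 3) (Fin 3) ℝ)ᵀ * (Tpent s₂ k₂)ᵀ ≠ PhiH := by
  intro k₁ _ k₂ _ s₁ s₂ _ _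
  have hcos : 0 < Real.cos (Real.pi / 5) := by
    apply Real.cos_pos_of_mem_Ioo
    constructor
    · nlinarith [Real.pi_pos]
    · nlinarith [Real.pi_pos]
  have hsin : 0 < Real.sin (Real.pi / 5) := by
    apply Real.sin_pos_of_pos_of_lt_pi
    · positivity
    · nlinarith [Real.pi_pos]
  have hr : 0 < rP := Real.sqrt_pos.2 (by positivity)
  have hne : PhiH 1 2 ≠ 0 := by
    have : PhiH 1 2 = -(rP ^ 3) / (4 * Real.sin (Real.pi / 5)) := by
      simp [PhiH]
    rw [this]
    have : 0 < rP ^ 3 / (4 * Real.sin (Real.pi / 5)) := by positivity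
    intro h
    rw [neg_div] at h
    linarith
  constructor <;>
  · intro h
    apply hne
    rw [← h]
    simp [Tpent, Matrix.mul_apply, Matrix.transpose_apply, Fin.sum_univ_three, Matrix.vecHead, Matrix.vecTail]
end
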